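/- Let ρ be an N-partite d-level density matrix (positive semidefinite matrix indexed by (Fin N → Fin d) with trace 1). If there exists a subsystem j : Fin N such that tr (ρ_j)² < tr ρ², then ρ is not fully separable (i.e. ρ is entangled). -/

import Mathlib

open scoped ComplexOrder

noncomputable section

/-- Extend an assignment `g` on the indices other than `j` by the value `x` at position `j`. -/
def insertAt {N d : ℕ} (j : Fin N) (x : Fin d) (g : {i : Fin N // i ≠ j} → Fin d) :
    Fin N → Fin d :=
  fun i => if h : i = j then x else g ⟨i, h⟩

/-- The one-qudit reduced density matrix at site `j`. -/
def reduced {N d : ℕ} (ρ : Matrix (Fin N → Fin d) (Fin N → Fin d) ℂ) (j : Fin N) :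
    Matrix (Fin d) (Fin d) ℂ :=
  Matrix.of fun x y => ∑ g : {i : Fin N // i ≠ j} → Fin d,
    ρ (insertAt j x g) (insertAt j y g)

/-- Full separability of an `N`-partite `d`-level state. -/
def FullySeparable {N d : ℕ} (ρ : Matrix (Fin N → Fin d) (Fin N → Fin d) ℂ) : Prop :=
  ∃ (m : ℕ) (p : Fin m → ℝ) (σ : Fin m → Fin N → Matrix (Fin d) (Fin d) ℂ),
    (∀ i, 0 ≤ p i) ∧ (∑ i, p i = 1) ∧
    (∀ i k, (σ i k).PosSemidef ∧ (σ i k).trace = 1) ∧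
    (∀ a b, ρ a b = ∑ i, (p i : ℂ) * ∏ k, σ i k (a k) (b k))

/-! For a fully separable `ρ = ∑ᵢ pᵢ ⊗ₖ σᵢᵏ`, both purities expand as `∑ᵢᵢ' pᵢ pᵢ' (…)`, with
`∏ₖ tr (σᵢᵏ σᵢ'ᵏ)` for `tr ρ²` and the single factor `tr (σᵢʲ σᵢ'ʲ)` for `tr ρⱼ²`. Every factor
lies in `[0, 1]`: writing `A = X⋆X`, `B = Y⋆Y`, one has `tr (A B) = ‖X Y⋆‖²` in the Frobenius
norm, which is submultiplicative. Hence the product is at most its `j`-th factor, and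
`tr ρ² ≤ tr ρⱼ²`. -/

open scoped Matrix MatrixOrder

namespace Matrix

section Frobenius

variable {𝕜 m n : Type*} [RCLike 𝕜] [Fintype m] [Fintype n]

attribute [local instance] frobeniusNormedAddCommGroup

theorem trace_conjTranspose_mul_self_eq_frobenius_norm_sq (M : Matrix m n 𝕜) :
    (Mᴴ * M).trace = ((‖M‖ ^ 2 : ℝ) : 𝕜) := by
  have hnorm_sq : ‖M‖ ^ 2 = ∑ i, ∑ j, ‖M i j‖ ^ 2 := by
    rw [frobenius_norm_def, ← Real.rpow_natCast, ← Real.rpow_mul (by positivity)]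
    norm_num
  rw [hnorm_sq, Finset.sum_comm]
  simp [trace, mul_apply, RCLike.conj_mul]

theorem PosSemidef.trace_mul_nonneg_and_le [DecidableEq n] {A B : Matrix n n 𝕜}
    (hA : A.PosSemidef) (hB : B.PosSemidef) :
    0 ≤ (A * B).trace ∧ (A * B).trace ≤ A.trace * B.trace := by
  obtain ⟨X, rfl⟩ := CStarAlgebra.nonneg_iff_eq_star_mul_self.mp hA.nonneg
  obtain ⟨Y, rfl⟩ := CStarAlgebra.nonneg_iff_eq_star_mul_self.mp hB.nonneg
  have hcycle :
      (star X * X * (star Y * Y)).trace = (star (X * star Y) * (X * star Y)).trace := by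
    rw [star_mul, star_star, trace_mul_comm, Matrix.mul_assoc, trace_mul_comm (star Y)]
    simp only [Matrix.mul_assoc]
  rw [hcycle]
  simp only [star_eq_conjTranspose, trace_conjTranspose_mul_self_eq_frobenius_norm_sq,
    ← RCLike.ofReal_mul, RCLike.ofReal_nonneg, RCLike.ofReal_le_ofReal, ← mul_pow]
  refine ⟨by positivity, pow_le_pow_left₀ (norm_nonneg _) ?_ 2⟩
  simpa [frobenius_norm_conjTranspose] using frobenius_norm_mul X Yᴴ

end Frobenius

variable {ι n R : Type*} [Fintype ι] [DecidableEq ι] [Fintype n] [CommSemiring R]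

def piKronecker (σ : ι → Matrix n n R) : Matrix (ι → n) (ι → n) R :=
  of fun a b => ∏ k, σ k (a k) (b k)

theorem trace_piKronecker_mul_piKronecker (σ τ : ι → Matrix n n R) :
    (piKronecker σ * piKronecker τ).trace = ∏ k, (σ k * τ k).trace := by
  simp only [trace, diag_apply, mul_apply, piKronecker, of_apply, ← Finset.prod_mul_distrib,
    Finset.prod_univ_sum, Fintype.piFinset_univ]

theorem trace_sum_smul_mul_sum_smul {m : Type*} [Fintype m] (c : m → R)
    (A B : m → Matrix n n R) :
    ((∑ i, c i • A i) * ∑ i, c i • B i).trace = ∑ i, ∑ i', c i * c i' * (A i * B i').trace := by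
  simp only [Finset.sum_mul_sum, smul_mul_smul, trace_sum, trace_smul, smul_eq_mul]

end Matrix

open Matrix

theorem reduced_sum_smul {N d : ℕ} {m : Type*} [Fintype m] (c : m → ℂ)
    (A : m → Matrix (Fin N → Fin d) (Fin N → Fin d) ℂ) (j : Fin N) :
    reduced (∑ i, c i • A i) j = ∑ i, c i • reduced (A i) j := by
  ext x y
  simp only [reduced, of_apply, Matrix.sum_apply, Matrix.smul_apply, smul_eq_mul, Finset.mul_sum]
  exact Finset.sum_comm

theorem reduced_piKronecker {N d : ℕ} (σ : Fin N → Matrix (Fin d) (Fin d) ℂ) (j : Fin N) :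
    reduced (piKronecker σ) j = (∏ k : {k : Fin N // k ≠ j}, (σ k).trace) • σ j := by
  ext x y
  have hj (g : {i : Fin N // i ≠ j} → Fin d) (x : Fin d) : insertAt j x g j = x := dif_pos rfl
  have hk (g : {i : Fin N // i ≠ j} → Fin d) (x : Fin d) (k : {i : Fin N // i ≠ j}) :
      insertAt j x g k = g k := dif_neg k.2
  simp only [reduced, piKronecker, of_apply, Matrix.smul_apply, smul_eq_mul,
    Fintype.prod_eq_mul_prod_subtype_ne _ j, hj, hk, ← Finset.mul_sum, trace, diag_apply]
  rw [Finset.prod_univ_sum, Fintype.piFinset_univ, mul_comm]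

theorem FullySeparable.exists_eq_sum_smul_piKronecker {N d : ℕ}
    {ρ : Matrix (Fin N → Fin d) (Fin N → Fin d) ℂ} (h : FullySeparable ρ) :
    ∃ (m : ℕ) (p : Fin m → ℝ) (σ : Fin m → Fin N → Matrix (Fin d) (Fin d) ℂ),
      (∀ i, 0 ≤ p i) ∧ (∀ i k, (σ i k).PosSemidef ∧ (σ i k).trace = 1) ∧
      ρ = ∑ i, (p i : ℂ) • piKronecker (σ i) := by
  obtain ⟨m, p, σ, hp, -, hσ, hρ⟩ := h
  refine ⟨m, p, σ, hp, hσ, ?_⟩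
  ext a b
  simp [hρ, piKronecker, Matrix.sum_apply]

theorem FullySeparable.trace_mul_self_le_trace_reduced_mul_self {N d : ℕ}
    {ρ : Matrix (Fin N → Fin d) (Fin N → Fin d) ℂ} (h : FullySeparable ρ) (j : Fin N) :
    (ρ * ρ).trace ≤ (reduced ρ j * reduced ρ j).trace := by
  obtain ⟨m, p, σ, hp, hσ, rfl⟩ := h.exists_eq_sum_smul_piKronecker
  have hred : reduced (∑ i, (p i : ℂ) • piKronecker (σ i)) j = ∑ i, (p i : ℂ) • σ i j := by
    simp only [reduced_sum_smul, reduced_piKronecker, (hσ _ _).2, Finset.prod_const_one,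
      one_smul]
  have ht (i i' : Fin m) (k : Fin N) :
      0 ≤ (σ i k * σ i' k).trace ∧ (σ i k * σ i' k).trace ≤ 1 := by
    simpa [(hσ i k).2, (hσ i' k).2] using (hσ i k).1.trace_mul_nonneg_and_le (hσ i' k).1
  rw [hred, trace_sum_smul_mul_sum_smul, trace_sum_smul_mul_sum_smul]
  gcongr with i _ i' _
  · exact mul_nonneg (by exact_mod_cast hp i) (by exact_mod_cast hp i')
  rw [trace_piKronecker_mul_piKronecker, Fintype.prod_eq_mul_prod_subtype_ne _ j]
  exact mul_le_of_le_one_right (ht i i' j).1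
    (Finset.prod_le_one (fun k _ => (ht i i' k).1) fun k _ => (ht i i' k).2)

theorem entangled_of_reduced_purity_lt_purity_general
    (N d : ℕ) (ρ : Matrix (Fin N → Fin d) (Fin N → Fin d) ℂ)
    (hlt : ∃ j : Fin N, (reduced ρ j * reduced ρ j).trace < (ρ * ρ).trace) :
    ¬ FullySeparable ρ := by
  intro hsep
  obtain ⟨j, hj⟩ := hlt
  exact (hsep.trace_mul_self_le_trace_reduced_mul_self j).not_gt hj

/-- If some one-qudit reduced density matrix of `ρ` has purity strictly smaller than the
purity of `ρ`, then `ρ` is entangled, i.e. not fully separable. -/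
theorem entangled_of_reduced_purity_lt_purity
    (N d : ℕ) (ρ : Matrix (Fin N → Fin d) (Fin N → Fin d) ℂ)
    (hpsd : ρ.PosSemidef) (htr : ρ.trace = 1)
    (hlt : ∃ j : Fin N, (reduced ρ j * reduced ρ j).trace < (ρ * ρ).trace) :
    ¬ FullySeparable ρ :=
  entangled_of_reduced_purity_lt_purity_general N d ρ hlt
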